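/- arXiv:1612.04400 — 2 statements merged into one kernel-verified Lean document; each statement's English description precedes it below -/
import Mathlib

section
/- Let γ>1, κ=(γ−1)/γ, c²(p)=γp^κ. Let V be an open subset of {(θ,r): r>0} and p:V→ℝ a C² function with p>0 and c²(p)<r² on V, satisfying the equation p_θθ − λ²·p_rr = −(r/c²(p))(c²(p)−2r²)·p_r − (κ·r⁴/(c²(p)·p))·p_r², where λ = r√((r²−c²(p))/c²(p)). Then the functions R := p_θ + λ·p_r and S := p_θ − λ·p_r satisfy the characteristic decomposition R_θ − λ·R_r = 𝔥·(S−R)·R and S_θ + λ·S_r = 𝔥·(R−S)·S on V, where 𝔥 = r²·(c²)'(p)/(4c²(p)(r²−c²(p))) and (c²)'(p)=(γ−1)p^{κ−1}. -/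
open Real

/- Coordinates: q = (θ, r), i.e. q.1 = θ, q.2 = r. -/

/-- Partial derivative in the first (θ) variable. -/
noncomputable def pdTheta (f : ℝ × ℝ → ℝ) (q : ℝ × ℝ) : ℝ :=
  deriv (fun t => f (t, q.2)) q.1

/-- Partial derivative in the second (r) variable. -/
noncomputable def pdR (f : ℝ × ℝ → ℝ) (q : ℝ × ℝ) : ℝ :=
  deriv (fun t => f (q.1, t)) q.2

/-- The characteristic speed λ = r √((r² − c²(p))/c²(p)), with c²(p) = γ p^κ. -/
noncomputable def lam (γ κ : ℝ) (p : ℝ × ℝ → ℝ) (q : ℝ × ℝ) : ℝ :=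
  q.2 * Real.sqrt ((q.2 ^ 2 - γ * p q ^ κ) / (γ * p q ^ κ))

/-- R = ∂₊p = p_θ + λ p_r. -/
noncomputable def Rplus (γ κ : ℝ) (p : ℝ × ℝ → ℝ) (q : ℝ × ℝ) : ℝ :=
  pdTheta p q + lam γ κ p q * pdR p q

/-- S = ∂₋p = p_θ − λ p_r. -/
noncomputable def Sminus (γ κ : ℝ) (p : ℝ × ℝ → ℝ) (q : ℝ × ℝ) : ℝ :=
  pdTheta p q - lam γ κ p q * pdR p q

/-- 𝔥 = r² (c²)'(p) / (4 c²(p) (r² − c²(p))), with (c²)'(p) = (γ−1) p^{κ−1}. -/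
noncomputable def hfrak (γ κ : ℝ) (p : ℝ × ℝ → ℝ) (q : ℝ × ℝ) : ℝ :=
  q.2 ^ 2 * ((γ - 1) * p q ^ (κ - 1)) / (4 * (γ * p q ^ κ) * (q.2 ^ 2 - γ * p q ^ κ))

/-
Expanding the definitions, the mixed partials cancel by symmetry of the second derivative and

  R_θ − λ R_r = (p_θθ − λ² p_rr) + (λ_θ − λ λ_r) p_r.

The equation replaces the bracket by a polynomial in p_r, and differentiating λ² = r⁴/c² − r²
gives λ_θ and λ λ_r in terms of p_θ and p_r, using (c²)'(p) = κ c²/p; what remains is an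
algebraic identity. The same formulas hold for −λ in place of λ, and S is R built from −λ, so the
second equation is the first one for −λ.
-/

section PartialDerivatives

variable {f : ℝ × ℝ → ℝ} {q : ℝ × ℝ}

theorem HasFDerivAt.hasDerivAt_fst_slice {L : ℝ × ℝ →L[ℝ] ℝ} (h : HasFDerivAt f L q) :
    HasDerivAt (fun t => f (t, q.2)) (L (1, 0)) q.1 :=
  h.comp_hasDerivAt q.1 ((hasDerivAt_id q.1).prodMk (hasDerivAt_const q.1 q.2))

theorem HasFDerivAt.hasDerivAt_snd_slice {L : ℝ × ℝ →L[ℝ] ℝ} (h : HasFDerivAt f L q) :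
    HasDerivAt (fun s => f (q.1, s)) (L (0, 1)) q.2 :=
  h.comp_hasDerivAt q.2 ((hasDerivAt_const q.2 q.1).prodMk (hasDerivAt_id q.2))

theorem ContDiffAt.hasFDerivAt_fderiv_apply (hf : ContDiffAt ℝ 2 f q) (v : ℝ × ℝ) :
    HasFDerivAt (fun y => fderiv ℝ f y v) ((fderiv ℝ (fderiv ℝ f) q).flip v) q := by
  simpa using (((hf.fderiv_right le_rfl).differentiableAt one_ne_zero).hasFDerivAt).clm_apply
    (hasFDerivAt_const v q)

theorem ContDiffAt.hasFDerivAt_pdTheta (hf : ContDiffAt ℝ 2 f q) :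
    HasFDerivAt (pdTheta f) ((fderiv ℝ (fderiv ℝ f) q).flip (1, 0)) q := by
  refine (hf.hasFDerivAt_fderiv_apply (1, 0)).congr_of_eventuallyEq ?_
  filter_upwards [hf.eventually (by simp)] with y hy
  exact ((hy.differentiableAt two_ne_zero).hasFDerivAt.hasDerivAt_fst_slice).deriv

theorem ContDiffAt.hasFDerivAt_pdR (hf : ContDiffAt ℝ 2 f q) :
    HasFDerivAt (pdR f) ((fderiv ℝ (fderiv ℝ f) q).flip (0, 1)) q := by
  refine (hf.hasFDerivAt_fderiv_apply (0, 1)).congr_of_eventuallyEq ?_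
  filter_upwards [hf.eventually (by simp)] with y hy
  exact ((hy.differentiableAt two_ne_zero).hasFDerivAt.hasDerivAt_snd_slice).deriv

theorem pdTheta_sub_mul_pdR_add_mul_eq (hf : ContDiffAt ℝ 2 f q) {ℓ : ℝ × ℝ → ℝ} {ℓθ ℓr : ℝ}
    (hℓθ : HasDerivAt (fun t => ℓ (t, q.2)) ℓθ q.1)
    (hℓr : HasDerivAt (fun s => ℓ (q.1, s)) ℓr q.2) :
    pdTheta (fun y => pdTheta f y + ℓ y * pdR f y) q
        - ℓ q * pdR (fun y => pdTheta f y + ℓ y * pdR f y) q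
      = pdTheta (pdTheta f) q - ℓ q ^ 2 * pdR (pdR f) q + (ℓθ - ℓ q * ℓr) * pdR f q := by
  have hθθ := hf.hasFDerivAt_pdTheta.hasDerivAt_fst_slice
  have hθr := hf.hasFDerivAt_pdTheta.hasDerivAt_snd_slice
  have hrθ := hf.hasFDerivAt_pdR.hasDerivAt_fst_slice
  have hrr := hf.hasFDerivAt_pdR.hasDerivAt_snd_slice
  have hRθ : HasDerivAt (fun t => pdTheta f (t, q.2) + ℓ (t, q.2) * pdR f (t, q.2)) _ q.1 :=
    hθθ.add (hℓθ.mul hrθ)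
  have hRr : HasDerivAt (fun s => pdTheta f (q.1, s) + ℓ (q.1, s) * pdR f (q.1, s)) _ q.2 :=
    hθr.add (hℓr.mul hrr)
  have hsymm : fderiv ℝ (fderiv ℝ f) q (0, 1) (1, 0) = fderiv ℝ (fderiv ℝ f) q (1, 0) (0, 1) :=
    hf.isSymmSndFDerivAt (by simp) _ _
  have hRθ' : pdTheta (fun y => pdTheta f y + ℓ y * pdR f y) q = _ := hRθ.deriv
  have hRr' : pdR (fun y => pdTheta f y + ℓ y * pdR f y) q = _ := hRr.deriv
  have hθθ' : pdTheta (pdTheta f) q = _ := hθθ.deriv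
  have hrr' : pdR (pdR f) q = _ := hrr.deriv
  rw [hRθ', hRr', hθθ', hrr']
  simp only [ContinuousLinearMap.flip_apply, hsymm, Prod.mk.eta]
  ring

theorem DifferentiableAt.hasDerivAt_pdTheta (h : DifferentiableAt ℝ f q) :
    HasDerivAt (fun t => f (t, q.2)) (pdTheta f q) q.1 :=
  h.hasFDerivAt.hasDerivAt_fst_slice.differentiableAt.hasDerivAt

theorem DifferentiableAt.hasDerivAt_pdR (h : DifferentiableAt ℝ f q) :
    HasDerivAt (fun s => f (q.1, s)) (pdR f q) q.2 :=
  h.hasFDerivAt.hasDerivAt_snd_slice.differentiableAt.hasDerivAt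

end PartialDerivatives

theorem characteristic_identity {κ r c2 P pθ pr ℓ : ℝ} (hr : r ≠ 0) (hc : c2 ≠ 0) (hP : P ≠ 0)
    (hℓ : ℓ ≠ 0) (hℓsq : ℓ ^ 2 = r ^ 4 / c2 - r ^ 2) :
    -(r / c2) * (c2 - 2 * r ^ 2) * pr - κ * r ^ 4 / (c2 * P) * pr ^ 2
        + (-(κ * r ^ 4 * pθ) / (2 * P * c2 * ℓ)
          - ℓ * ((2 * r ^ 3 / c2 - r - κ * r ^ 4 * pr / (2 * P * c2)) / ℓ)) * pr
      = κ * r ^ 2 / (4 * P * (r ^ 2 - c2)) * ((pθ - ℓ * pr) - (pθ + ℓ * pr)) * (pθ + ℓ * pr) := by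
  have hrc : r ^ 2 - c2 = c2 * ℓ ^ 2 / r ^ 2 := by
    rw [hℓsq]; field_simp
  rw [hrc]
  field_simp
  ring

theorem pdTheta_sub_mul_pdR_add_mul_eq_of_pde {f : ℝ × ℝ → ℝ} {q : ℝ × ℝ} {κ c2 P : ℝ}
    (hf : ContDiffAt ℝ 2 f q) (hr : q.2 ≠ 0) (hc : c2 ≠ 0) (hP : P ≠ 0) {ℓ : ℝ × ℝ → ℝ}
    (hℓ : ℓ q ≠ 0) (hℓsq : ℓ q ^ 2 = q.2 ^ 4 / c2 - q.2 ^ 2)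
    (hℓθ : HasDerivAt (fun t => ℓ (t, q.2))
      (-(κ * q.2 ^ 4 * pdTheta f q) / (2 * P * c2 * ℓ q)) q.1)
    (hℓr : HasDerivAt (fun s => ℓ (q.1, s))
      ((2 * q.2 ^ 3 / c2 - q.2 - κ * q.2 ^ 4 * pdR f q / (2 * P * c2)) / ℓ q) q.2)
    (hpde : pdTheta (pdTheta f) q - ℓ q ^ 2 * pdR (pdR f) q =
      -(q.2 / c2) * (c2 - 2 * q.2 ^ 2) * pdR f q - (κ * q.2 ^ 4 / (c2 * P)) * pdR f q ^ 2) :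
    pdTheta (fun y => pdTheta f y + ℓ y * pdR f y) q
        - ℓ q * pdR (fun y => pdTheta f y + ℓ y * pdR f y) q
      = κ * q.2 ^ 2 / (4 * P * (q.2 ^ 2 - c2))
        * ((pdTheta f q - ℓ q * pdR f q) - (pdTheta f q + ℓ q * pdR f q))
        * (pdTheta f q + ℓ q * pdR f q) := by
  rw [pdTheta_sub_mul_pdR_add_mul_eq hf hℓθ hℓr, hpde]
  exact characteristic_identity hr hc hP hℓ hℓsq

section SoundSpeed

variable {γ κ : ℝ} {p : ℝ × ℝ → ℝ} {q : ℝ × ℝ}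

-- Applied along entire slices through q, where nothing is known about the sign of c².
theorem lam_eq_sqrt (hr : 0 ≤ q.2) :
    lam γ κ p q = √(q.2 ^ 4 / (γ * p q ^ κ) - q.2 ^ 2) := by
  set c := γ * p q ^ κ
  calc lam γ κ p q = √(q.2 ^ 2) * √((q.2 ^ 2 - c) / c) := by rw [Real.sqrt_sq hr]; rfl
    _ = √(q.2 ^ 2 * ((q.2 ^ 2 - c) / c)) := (Real.sqrt_mul (sq_nonneg _) _).symm
    _ = √(q.2 ^ 4 / c - q.2 ^ 2) := by
      by_cases hc : c = 0
      · rw [hc, div_zero, mul_zero, div_zero, zero_sub, Real.sqrt_zero,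
          Real.sqrt_eq_zero_of_nonpos (neg_nonpos.2 (sq_nonneg _))]
      · congr 1
        field_simp

theorem lam_pos (hr : 0 < q.2) (hc : 0 < γ * p q ^ κ) (hcr : γ * p q ^ κ < q.2 ^ 2) :
    0 < lam γ κ p q :=
  mul_pos hr (Real.sqrt_pos.2 (div_pos (sub_pos.2 hcr) hc))

theorem sq_lam (hc : 0 < γ * p q ^ κ) (hcr : γ * p q ^ κ < q.2 ^ 2) :
    lam γ κ p q ^ 2 = q.2 ^ 4 / (γ * p q ^ κ) - q.2 ^ 2 := by
  rw [lam, mul_pow, Real.sq_sqrt (div_pos (sub_pos.2 hcr) hc).le, sub_div, div_self hc.ne']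
  ring

theorem sq_lam_ne_zero (hr : 0 < q.2) (hc : 0 < γ * p q ^ κ) (hcr : γ * p q ^ κ < q.2 ^ 2) :
    q.2 ^ 4 / (γ * p q ^ κ) - q.2 ^ 2 ≠ 0 :=
  sq_lam hc hcr ▸ (pow_pos (lam_pos hr hc hcr) 2).ne'

theorem hasDerivAt_lam_fst_slice (hr : 0 < q.2) (hP : 0 < p q) (hc : 0 < γ * p q ^ κ)
    (hcr : γ * p q ^ κ < q.2 ^ 2) {pθ : ℝ} (hpθ : HasDerivAt (fun t => p (t, q.2)) pθ q.1) :
    HasDerivAt (fun t => lam γ κ p (t, q.2))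
      (-(κ * q.2 ^ 4 * pθ) / (2 * p q * (γ * p q ^ κ) * lam γ κ p q)) q.1 := by
  have hc' := (hpθ.rpow_const (p := κ) (Or.inl hP.ne')).const_mul γ
  have hΛ : HasDerivAt (fun t => q.2 ^ 4 / (γ * p (t, q.2) ^ κ) - q.2 ^ 2) _ q.1 :=
    ((hasDerivAt_const q.1 (q.2 ^ 4)).div hc' hc.ne').sub_const (q.2 ^ 2)
  have hlam : (fun t => lam γ κ p (t, q.2)) =
      fun t => √(q.2 ^ 4 / (γ * p (t, q.2) ^ κ) - q.2 ^ 2) :=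
    funext fun t => lam_eq_sqrt (q := (t, q.2)) hr.le
  rw [hlam]
  refine (hΛ.sqrt (sq_lam_ne_zero hr hc hcr)).congr_deriv ?_
  rw [← lam_eq_sqrt hr.le, Real.rpow_sub_one hP.ne']
  have hlam0 := (lam_pos hr hc hcr).ne'
  have hc0 := hc.ne'
  field_simp
  ring

theorem hasDerivAt_lam_snd_slice (hr : 0 < q.2) (hP : 0 < p q) (hc : 0 < γ * p q ^ κ)
    (hcr : γ * p q ^ κ < q.2 ^ 2) {pr : ℝ} (hpr : HasDerivAt (fun s => p (q.1, s)) pr q.2) :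
    HasDerivAt (fun s => lam γ κ p (q.1, s))
      ((2 * q.2 ^ 3 / (γ * p q ^ κ) - q.2 - κ * q.2 ^ 4 * pr / (2 * p q * (γ * p q ^ κ)))
        / lam γ κ p q) q.2 := by
  have hc' := (hpr.rpow_const (p := κ) (Or.inl hP.ne')).const_mul γ
  have hΛ : HasDerivAt (fun s => s ^ 4 / (γ * p (q.1, s) ^ κ) - s ^ 2) _ q.2 :=
    ((hasDerivAt_pow 4 q.2).div hc' hc.ne').sub (hasDerivAt_pow 2 q.2)
  refine ((hΛ.sqrt (sq_lam_ne_zero hr hc hcr)).congr_of_eventuallyEq ?_).congr_deriv ?_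
  · filter_upwards [lt_mem_nhds hr] with s hs
    exact lam_eq_sqrt (q := (q.1, s)) hs.le
  · rw [← lam_eq_sqrt hr.le, Real.rpow_sub_one hP.ne']
    have hlam0 := (lam_pos hr hc hcr).ne'
    have hc0 := hc.ne'
    field_simp
    ring

theorem hfrak_eq (hγ : γ ≠ 0) (hκ : κ = (γ - 1) / γ) (hP : 0 < p q) :
    hfrak γ κ p q = κ * q.2 ^ 2 / (4 * p q * (q.2 ^ 2 - γ * p q ^ κ)) := by
  have hc : γ * p q ^ κ ≠ 0 := mul_ne_zero hγ (Real.rpow_pos_of_pos hP κ).ne'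
  have hγκ : γ - 1 = γ * κ := by rw [hκ]; field_simp
  rw [hfrak, Real.rpow_sub_one hP.ne', hγκ]
  field_simp

end SoundSpeed

theorem characteristic_decomposition
    (γ κ : ℝ) (hγ : 1 < γ) (hκ : κ = (γ - 1) / γ)
    (V : Set (ℝ × ℝ)) (hV : IsOpen V) (hVr : V ⊆ {q : ℝ × ℝ | 0 < q.2})
    (p : ℝ × ℝ → ℝ) (hp : ContDiffOn ℝ 2 p V)
    (hppos : ∀ q ∈ V, 0 < p q)
    (hhyp : ∀ q ∈ V, γ * p q ^ κ < q.2 ^ 2)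
    (heq : ∀ q ∈ V,
      pdTheta (pdTheta p) q - (lam γ κ p q) ^ 2 * pdR (pdR p) q =
        -(q.2 / (γ * p q ^ κ)) * (γ * p q ^ κ - 2 * q.2 ^ 2) * pdR p q
          - (κ * q.2 ^ 4 / ((γ * p q ^ κ) * p q)) * (pdR p q) ^ 2) :
    ∀ q ∈ V,
      pdTheta (Rplus γ κ p) q - lam γ κ p q * pdR (Rplus γ κ p) q
        = hfrak γ κ p q * (Sminus γ κ p q - Rplus γ κ p q) * Rplus γ κ p q ∧
      pdTheta (Sminus γ κ p) q + lam γ κ p q * pdR (Sminus γ κ p) q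
        = hfrak γ κ p q * (Rplus γ κ p q - Sminus γ κ p q) * Sminus γ κ p q := by
  intro q hq
  have hr : 0 < q.2 := hVr hq
  have hP := hppos q hq
  have hc : 0 < γ * p q ^ κ := mul_pos (by linarith) (Real.rpow_pos_of_pos hP κ)
  have hcr := hhyp q hq
  have hf : ContDiffAt ℝ 2 p q := hp.contDiffAt (hV.mem_nhds hq)
  have hdiff := hf.differentiableAt two_ne_zero
  have hlamθ := hasDerivAt_lam_fst_slice hr hP hc hcr hdiff.hasDerivAt_pdTheta
  have hlamr := hasDerivAt_lam_snd_slice hr hP hc hcr hdiff.hasDerivAt_pdR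
  have hlam0 := (lam_pos hr hc hcr).ne'
  have hR := pdTheta_sub_mul_pdR_add_mul_eq_of_pde hf hr.ne' hc.ne' hP.ne' hlam0
    (sq_lam hc hcr) hlamθ hlamr (heq q hq)
  have hS := pdTheta_sub_mul_pdR_add_mul_eq_of_pde hf hr.ne' hc.ne' hP.ne' (κ := κ)
    (ℓ := -lam γ κ p) (neg_ne_zero.2 hlam0) (by rw [Pi.neg_apply, neg_sq, sq_lam hc hcr])
    (hlamθ.neg.congr_deriv (by rw [Pi.neg_apply]; ring))
    (hlamr.neg.congr_deriv (by rw [Pi.neg_apply]; ring))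
    (by simpa only [Pi.neg_apply, neg_sq] using heq q hq)
  have hSminus : Sminus γ κ p = fun y => pdTheta p y + (-lam γ κ p) y * pdR p y := by
    funext y; rw [Sminus, Pi.neg_apply, neg_mul, ← sub_eq_add_neg]
  rw [← hSminus, Pi.neg_apply] at hS
  have hRq : Rplus γ κ p q = pdTheta p q + lam γ κ p q * pdR p q := rfl
  have hSq : Sminus γ κ p q = pdTheta p q - lam γ κ p q * pdR p q := rfl
  rw [hfrak_eq (by linarith) hκ hP, hRq, hSq]
  exact ⟨hR, by linear_combination hS⟩
end

section
/- Let ξ>0, η>0 and c>0 satisfy 0<c²<ξ²+η² and ξ²≠c². Define Λ₋ = (ξη − √(c²(ξ²+η²−c²)))/(ξ²−c²) and Λ₊ = (ξη + √(c²(ξ²+η²−c²)))/(ξ²−c²). Then: (i) ξ·Λ₋ − η < 0; (ii) η·Λ₋ + ξ > 0; (iii) Λ₊ ≠ 0, and η·Λ₊^{−1} − ξ < 0; (iv) ξ·Λ₊^{−1} + η > 0. -/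
/-! Since `(ξη)² - c²(ξ² + η² - c²) = (ξ² - c²)(η² - c²)`, rationalizing the numerator gives
`Λ₋ = (η² - c²) / (ξη + √(c²(ξ² + η² - c²)))`, while `1 / Λ₊` is the same expression with `ξ` and
`η` exchanged. The square root now sits in a positive denominator, and each of the four claims
reduces, after clearing that denominator, to the positivity of a sum of nonnegative terms. -/

open Real

/- STATEMENT 6: sign properties of the Cartesian characteristic slopes
Λ± = (ξη ± √(c²(ξ²+η²−c²)))/(ξ²−c²). -/

/-- The negative Cartesian characteristic slope Λ₋. -/
noncomputable def LamNeg (ξ η c : ℝ) : ℝ :=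
  (ξ * η - Real.sqrt (c ^ 2 * (ξ ^ 2 + η ^ 2 - c ^ 2))) / (ξ ^ 2 - c ^ 2)

/-- The positive Cartesian characteristic slope Λ₊. -/
noncomputable def LamPos (ξ η c : ℝ) : ℝ :=
  (ξ * η + Real.sqrt (c ^ 2 * (ξ ^ 2 + η ^ 2 - c ^ 2))) / (ξ ^ 2 - c ^ 2)

noncomputable def conjSlope (ξ η c : ℝ) : ℝ :=
  (η ^ 2 - c ^ 2) / (ξ * η + √(c ^ 2 * (ξ ^ 2 + η ^ 2 - c ^ 2)))

lemma sq_sub_sq_sqrt_disc {ξ η c : ℝ} (h : c ^ 2 ≤ ξ ^ 2 + η ^ 2) :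
    (ξ * η) ^ 2 - √(c ^ 2 * (ξ ^ 2 + η ^ 2 - c ^ 2)) ^ 2 = (ξ ^ 2 - c ^ 2) * (η ^ 2 - c ^ 2) := by
  rw [sq_sqrt (mul_nonneg (sq_nonneg c) (sub_nonneg.2 h))]
  ring

lemma mul_add_sqrt_disc_pos {ξ η : ℝ} (c : ℝ) (hξ : 0 < ξ) (hη : 0 < η) :
    0 < ξ * η + √(c ^ 2 * (ξ ^ 2 + η ^ 2 - c ^ 2)) :=
  add_pos_of_pos_of_nonneg (mul_pos hξ hη) (sqrt_nonneg _)

lemma lamNeg_eq_conjSlope {ξ η c : ℝ} (hξ : 0 < ξ) (hη : 0 < η) (hlt : c ^ 2 < ξ ^ 2 + η ^ 2)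
    (hne : ξ ^ 2 ≠ c ^ 2) : LamNeg ξ η c = conjSlope ξ η c := by
  rw [LamNeg, conjSlope, div_eq_div_iff (sub_ne_zero.2 hne) (mul_add_sqrt_disc_pos c hξ hη).ne']
  linear_combination sq_sub_sq_sqrt_disc hlt.le

lemma inv_lamPos_eq_conjSlope (ξ η c : ℝ) : (LamPos ξ η c)⁻¹ = conjSlope η ξ c := by
  rw [LamPos, conjSlope, inv_div, mul_comm η, add_comm (η ^ 2)]

lemma lamPos_ne_zero {ξ η c : ℝ} (hξ : 0 < ξ) (hη : 0 < η) (hne : ξ ^ 2 ≠ c ^ 2) :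
    LamPos ξ η c ≠ 0 :=
  div_ne_zero (mul_add_sqrt_disc_pos c hξ hη).ne' (sub_ne_zero.2 hne)

lemma mul_conjSlope_sub_neg {ξ η c : ℝ} (hξ : 0 < ξ) (hη : 0 < η) (hc : 0 < c) :
    ξ * conjSlope ξ η c - η < 0 := by
  rw [conjSlope, sub_neg, mul_div_assoc', div_lt_iff₀ (mul_add_sqrt_disc_pos c hξ hη)]
  nlinarith [mul_pos hξ (pow_pos hc 2),
    mul_nonneg hη.le (sqrt_nonneg (c ^ 2 * (ξ ^ 2 + η ^ 2 - c ^ 2)))]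

lemma mul_conjSlope_add_pos {ξ η c : ℝ} (hξ : 0 < ξ) (hη : 0 < η) (hlt : c ^ 2 < ξ ^ 2 + η ^ 2) :
    0 < η * conjSlope ξ η c + ξ := by
  rw [← neg_lt_iff_pos_add, conjSlope, mul_div_assoc', lt_div_iff₀ (mul_add_sqrt_disc_pos c hξ hη)]
  nlinarith [mul_pos hη (sub_pos.2 hlt),
    mul_nonneg hξ.le (sqrt_nonneg (c ^ 2 * (ξ ^ 2 + η ^ 2 - c ^ 2)))]

theorem slope_sign_properties
    (ξ η c : ℝ) (hξ : 0 < ξ) (hη : 0 < η) (hc : 0 < c)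
    (hlt : c ^ 2 < ξ ^ 2 + η ^ 2) (hne : ξ ^ 2 ≠ c ^ 2) :
    -- (i)
    ξ * LamNeg ξ η c - η < 0 ∧
    -- (ii)
    η * LamNeg ξ η c + ξ > 0 ∧
    -- (iii)
    (LamPos ξ η c ≠ 0 ∧ η * (LamPos ξ η c)⁻¹ - ξ < 0) ∧
    -- (iv)
    ξ * (LamPos ξ η c)⁻¹ + η > 0 := by
  have hlt' : c ^ 2 < η ^ 2 + ξ ^ 2 := by rwa [add_comm]
  rw [lamNeg_eq_conjSlope hξ hη hlt hne, inv_lamPos_eq_conjSlope]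
  exact ⟨mul_conjSlope_sub_neg hξ hη hc, mul_conjSlope_add_pos hξ hη hlt,
    ⟨lamPos_ne_zero hξ hη hne, mul_conjSlope_sub_neg hη hξ hc⟩, mul_conjSlope_add_pos hη hξ hlt'⟩
end
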